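/- arXiv:0908.1294 — 4 statements merged into one kernel-verified Lean document; each statement's English description precedes it below -/
import Mathlib

section
/- Let (X,B) be a finite CW pair and let ω = {f_U}_{U∈𝒰} and ω' be continuous closed 1-forms on X. If there exists a continuous function f : X → ℝ such that ω' is equivalent to the continuous closed 1-form ω + df = {f_U + f|_U}_{U∈𝒰}, then cat(X,B,ω) = cat(X,B,ω'). In particular, cat(X,B,ω) depends only on the cohomology class of ω. -/
open Set

/-- A continuous closed 1-form on a topological space `X`: a collection of continuous
real-valued functions on the members of an open cover whose pairwise differences are
locally constant on overlaps. -/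
structure ClosedOneForm (X : Type) [TopologicalSpace X] where
  ι : Type
  U : ι → Set X
  isOpen : ∀ i, IsOpen (U i)
  covers : ∀ x : X, ∃ i, x ∈ U i
  f : ι → X → ℝ
  cont : ∀ i, ContinuousOn (f i) (U i)
  locConst : ∀ i j, IsLocallyConstant (fun y : ↥(U i ∩ U j) => f i y - f j y)

namespace ClosedOneForm

variable {X Y : Type} [TopologicalSpace X] [TopologicalSpace Y]

/-- `r` is the value of the line integral of `ω` along `γ` over `[a,b]`, computed via a
partition `a = t_0 < t_1 < ⋯ < t_n = b` with `γ [t_i, t_{i+1}] ⊆ U (c i)`. -/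
def IsIntegralOn (ω : ClosedOneForm X) (γ : ℝ → X) (a b r : ℝ) : Prop :=
  ∃ (n : ℕ) (t : ℕ → ℝ) (c : ℕ → ω.ι),
    0 < n ∧ t 0 = a ∧ t n = b ∧ (∀ i < n, t i < t (i + 1)) ∧
    (∀ i < n, MapsTo γ (Icc (t i) (t (i + 1))) (ω.U (c i))) ∧
    r = ∑ i ∈ Finset.range n, (ω.f (c i) (γ (t (i + 1))) - ω.f (c i) (γ (t i)))

/-- The line integral of `ω` along `γ` over `[a,b]` (`0` if no suitable partition exists,
in particular it is `0` for a degenerate interval). -/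
noncomputable def intOn (ω : ClosedOneForm X) (γ : ℝ → X) (a b : ℝ) : ℝ :=
  haveI := Classical.propDecidable
  if h : ∃ r, ω.IsIntegralOn γ a b r then h.choose else 0

/-- The pullback of a continuous closed 1-form along a continuous map. -/
noncomputable def pullback (ω : ClosedOneForm X) (φ : Y → X) (hφ : Continuous φ) :
    ClosedOneForm Y where
  ι := ω.ι
  U i := φ ⁻¹' ω.U i
  isOpen i := (ω.isOpen i).preimage hφ
  covers y := ω.covers (φ y)
  f i := ω.f i ∘ φ
  cont i := (ω.cont i).comp hφ.continuousOn (mapsTo_preimage φ (ω.U i))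
  locConst i j := by
    have h := (ω.locConst i j).comp_continuous
      (f := fun y : ↥(φ ⁻¹' ω.U i ∩ φ ⁻¹' ω.U j) =>
        (⟨φ y.1, y.2⟩ : ↥(ω.U i ∩ ω.U j)))
      (by exact Continuous.subtype_mk (hφ.comp continuous_subtype_val) _)
    exact h

/-- The restriction of a continuous closed 1-form to a subspace. -/
noncomputable def restrict (ω : ClosedOneForm X) (B : Set X) : ClosedOneForm B :=
  ω.pullback (Subtype.val : B → X) continuous_subtype_val

/-- The sum of two continuous closed 1-forms, on the common refinement of the covers. -/
noncomputable def add (ω₁ ω₂ : ClosedOneForm X) : ClosedOneForm X where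
  ι := ω₁.ι × ω₂.ι
  U p := ω₁.U p.1 ∩ ω₂.U p.2
  isOpen p := (ω₁.isOpen p.1).inter (ω₂.isOpen p.2)
  covers x := by
    obtain ⟨i, hi⟩ := ω₁.covers x
    obtain ⟨j, hj⟩ := ω₂.covers x
    exact ⟨(i, j), hi, hj⟩
  f p x := ω₁.f p.1 x + ω₂.f p.2 x
  cont p := ((ω₁.cont p.1).mono inter_subset_left).add ((ω₂.cont p.2).mono inter_subset_right)
  locConst := by
    rintro ⟨i, j⟩ ⟨i', j'⟩
    have h₁ : IsLocallyConstant
        (fun y : ↥((ω₁.U i ∩ ω₂.U j) ∩ (ω₁.U i' ∩ ω₂.U j')) => ω₁.f i y - ω₁.f i' y) :=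
      by
        have := (ω₁.locConst i i').comp_continuous
          (f := fun y : ↥((ω₁.U i ∩ ω₂.U j) ∩ (ω₁.U i' ∩ ω₂.U j')) =>
            (⟨y.1, y.2.1.1, y.2.2.1⟩ : ↥(ω₁.U i ∩ ω₁.U i')))
          (Continuous.subtype_mk continuous_subtype_val _)
        exact this
    have h₂ : IsLocallyConstant
        (fun y : ↥((ω₁.U i ∩ ω₂.U j) ∩ (ω₁.U i' ∩ ω₂.U j')) => ω₂.f j y - ω₂.f j' y) :=
      by
        have := (ω₂.locConst j j').comp_continuous
          (f := fun y : ↥((ω₁.U i ∩ ω₂.U j) ∩ (ω₁.U i' ∩ ω₂.U j')) =>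
            (⟨y.1, y.2.1.2, y.2.2.2⟩ : ↥(ω₂.U j ∩ ω₂.U j')))
          (Continuous.subtype_mk continuous_subtype_val _)
        exact this
    have := h₁.add h₂
    convert this using 1
    funext y
    simp only [Pi.add_apply]
    ring

/-- Adding the exact form `df` of a continuous function `f` to `ω`. -/
def addFun (ω : ClosedOneForm X) (g : X → ℝ) (hg : Continuous g) : ClosedOneForm X where
  ι := ω.ι
  U := ω.U
  isOpen := ω.isOpen
  covers := ω.covers
  f i x := ω.f i x + g x
  cont i := (ω.cont i).add hg.continuousOn
  locConst i j := by
    have := ω.locConst i j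
    convert this using 1
    funext y
    ring

/-- The exact continuous closed 1-form `df` determined by a continuous function `f`,
given by the single function `f` on the open cover `{X}`. -/
def ofFun (g : X → ℝ) (hg : Continuous g) : ClosedOneForm X where
  ι := PUnit
  U _ := univ
  isOpen _ := isOpen_univ
  covers x := ⟨PUnit.unit, mem_univ x⟩
  f _ := g
  cont _ := hg.continuousOn
  locConst _ _ := by
    have : (fun y : ↥((univ : Set X) ∩ univ) => g y - g y) = fun _ => (0 : ℝ) := by
      funext; ring
    rw [this]
    exact IsLocallyConstant.const 0

/-- Two continuous closed 1-forms are equivalent if the union of their collections is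
again a continuous closed 1-form. -/
def Equivalent (ω₁ ω₂ : ClosedOneForm X) : Prop :=
  ∀ (i : ω₁.ι) (j : ω₂.ι),
    IsLocallyConstant (fun y : ↥(ω₁.U i ∩ ω₂.U j) => ω₁.f i y - ω₂.f j y)

end ClosedOneForm

section Pre2

open Set

variable {X : Type} [TopologicalSpace X]

namespace ClosedOneForm

/-- `D` is `(N,C)`-movable relative to `B` with respect to `ω`: there is a homotopy of the
inclusion `D ↪ X` keeping `B` inside `B`, such that every point of `D` either ends up in `B`
or travels a distance at most `-N` as measured by `ω`, while the integral along each partial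
trajectory stays bounded by `C`. -/
def IsMovable (ω : ClosedOneForm X) (B D : Set X) (N : ℕ) (C : ℝ) : Prop :=
  B ⊆ D ∧
  ∃ h : X → ℝ → X,
    ContinuousOn (fun p : X × ℝ => h p.1 p.2) (D ×ˢ Icc (0 : ℝ) 1) ∧
    (∀ x ∈ D, h x 0 = x) ∧
    (∀ t ∈ Icc (0 : ℝ) 1, ∀ b ∈ B, h b t ∈ B) ∧
    (∀ x ∈ D, h x 1 ∈ B ∨ ω.intOn (h x) 0 1 ≤ -(N : ℝ)) ∧
    (∀ x ∈ D, ∀ t ∈ Icc (0 : ℝ) 1, ω.intOn (h x) 0 t ≤ C)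

end ClosedOneForm

/-- The inclusion `A ↪ X` is null-homotopic in `X`. -/
def NullhomotopicIncl (A : Set X) : Prop :=
  ∃ (h : X → ℝ → X) (x₀ : X),
    ContinuousOn (fun p : X × ℝ => h p.1 p.2) (A ×ˢ Icc (0 : ℝ) 1) ∧
    (∀ x ∈ A, h x 0 = x) ∧ (∀ x ∈ A, h x 1 = x₀)

namespace ClosedOneForm

/-- There is a `C > 0` such that for every positive integer `N`, the space `X` admits an open
cover by `k` null-homotopic sets and one `(N,C)`-movable set relative to `B`. -/
def CatCoverProp (ω : ClosedOneForm X) (B : Set X) (k : ℕ) : Prop :=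
  ∃ C > (0 : ℝ), ∀ N : ℕ, 0 < N →
    ∃ (U₀ : Set X) (Ui : Fin k → Set X),
      IsOpen U₀ ∧ (∀ i, IsOpen (Ui i)) ∧
      U₀ ∪ (⋃ i, Ui i) = univ ∧
      (∀ i, NullhomotopicIncl (Ui i)) ∧
      ω.IsMovable B U₀ N C

/-- The relative Lusternik–Schnirelmann category `cat(X,B,ω)` of the pair `(X,B)` with respect
to the continuous closed 1-form `ω`. -/
noncomputable def catRel (ω : ClosedOneForm X) (B : Set X) : ℕ :=
  sInf {k | ω.CatCoverProp B k}

end ClosedOneForm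

/-- The classical relative Lusternik–Schnirelmann category `cat(X,B)`: the smallest `k` such
that `X` is covered by `k` open null-homotopic sets and one open set containing `B` which can
be deformed into `B` keeping `B` in `B`. -/
noncomputable def catClassical (X : Type) [TopologicalSpace X] (B : Set X) : ℕ :=
  sInf {k | ∃ (U₀ : Set X) (Ui : Fin k → Set X),
    IsOpen U₀ ∧ (∀ i, IsOpen (Ui i)) ∧
    U₀ ∪ (⋃ i, Ui i) = univ ∧
    (∀ i, NullhomotopicIncl (Ui i)) ∧
    B ⊆ U₀ ∧
    ∃ h : X → ℝ → X,
      ContinuousOn (fun p : X × ℝ => h p.1 p.2) (U₀ ×ˢ Icc (0 : ℝ) 1) ∧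
      (∀ x ∈ U₀, h x 0 = x) ∧
      (∀ t ∈ Icc (0 : ℝ) 1, ∀ b ∈ B, h b t ∈ B) ∧
      (∀ x ∈ U₀, h x 1 ∈ B)}

/-- A finite CW structure on a compact Hausdorff space `X`: a finite family of cells with
continuous characteristic maps defined on closed Euclidean balls, restricting to embeddings
on the open balls, whose images partition `X`, and whose boundary spheres are mapped into
the union of the cells of strictly smaller dimension. -/
structure FiniteCWStructure (X : Type) [TopologicalSpace X] where
  n : ℕ
  dim : Fin n → ℕ
  Φ : (i : Fin n) → (Fin (dim i) → ℝ) → X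
  cont : ∀ i, ContinuousOn (Φ i) (Metric.closedBall 0 1)
  embeds : ∀ i, Topology.IsEmbedding
    (fun x : ↥(Metric.ball (0 : Fin (dim i) → ℝ) 1) => Φ i x)
  cells_cover : (⋃ i, Φ i '' Metric.ball 0 1) = Set.univ
  cells_disjoint : ∀ i j, i ≠ j →
    Disjoint (Φ i '' Metric.ball 0 1) (Φ j '' Metric.ball 0 1)
  boundary : ∀ i, Φ i '' Metric.sphere 0 1 ⊆ ⋃ j ∈ {j | dim j < dim i}, Φ j '' Metric.ball 0 1

/-- `B` is a subcomplex of the finite CW structure `S`: a union of cells which is closed under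
attaching boundaries. -/
def FiniteCWStructure.IsSubcomplex (S : FiniteCWStructure X) (B : Set X) : Prop :=
  ∃ s : Set (Fin S.n),
    B = ⋃ i ∈ s, S.Φ i '' Metric.ball 0 1 ∧
    ∀ i ∈ s, S.Φ i '' Metric.sphere 0 1 ⊆ B

end Pre2

/-!
Along a path `γ`, a partition subordinate to the cover of `ω` glues the local primitives
`f_{c k} ∘ γ` into a single function `φ` which differs from `f_{c k} ∘ γ` by a constant on the
`k`-th piece, so that the partition sum for `ω` telescopes to `φ b - φ a`. If `ω' ∼ ω + df`,
then on each piece of a partition for `ω'` the function `φ + f ∘ γ - f'_j ∘ γ` is constant on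
the overlap with each piece for `ω` (an interval, mapped by `γ` into a set where
`f'_j - f_{c k} - f` is locally constant); these finitely many closed overlaps cover the
connected piece, so the function is constant on all of it, and the partition sum for `ω'`
telescopes to `(φ + f ∘ γ) b - (φ + f ∘ γ) a`. Thus line integrals of `ω'` and `ω` differ by
`f (γ b) - f (γ a)`, which is bounded by `2 sup |f|` on the compact space `X`; so an
`(N + 2 sup |f|, C)`-movable set for `ω` is `(N, C + 2 sup |f|)`-movable for `ω'`, and vice versa.
-/

section Partition

theorem sum_range_sub_eq_sub_of_forall {α G : Type*} [AddCommGroup G] {t : ℕ → α}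
    {g : ℕ → α → G} {φ : α → G} {n : ℕ}
    (h : ∀ i < n, g i (t (i + 1)) - g i (t i) = φ (t (i + 1)) - φ (t i)) :
    ∑ i ∈ Finset.range n, (g i (t (i + 1)) - g i (t i)) = φ (t n) - φ (t 0) := by
  rw [Finset.sum_congr rfl fun i hi => h i (Finset.mem_range.1 hi)]
  exact Finset.sum_range_sub (φ ∘ t) n

variable {α G : Type*} [LinearOrder α] [AddCommGroup G]

theorem le_of_forall_lt_succ_of_le_of_le {t : ℕ → α} {n : ℕ} (ht : ∀ i < n, t i < t (i + 1))
    {i j : ℕ} (hij : i ≤ j) (hjn : j ≤ n) : t i ≤ t j := by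
  induction j, hij using Nat.le_induction with
  | base => rfl
  | succ j _ ih => exact (ih (by omega)).trans (ht j (by omega)).le

theorem exists_lt_of_mem_Icc_partition {t : ℕ → α} {n : ℕ} (hn : 0 < n) {u : α}
    (hu : u ∈ Icc (t 0) (t n)) : ∃ k < n, u ∈ Icc (t k) (t (k + 1)) := by
  induction n with
  | zero => omega
  | succ n ih =>
    rcases Nat.eq_zero_or_pos n with rfl | hn
    · exact ⟨0, zero_lt_one, hu⟩
    rcases le_or_gt u (t n) with hun | hnu
    · obtain ⟨k, hk, huk⟩ := ih hn ⟨hu.1, hun⟩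
      exact ⟨k, by omega, huk⟩
    · exact ⟨n, n.lt_succ_self, hnu.le, hu.2⟩

theorem exists_sub_eq_on_partition (t : ℕ → α) (g : ℕ → α → G) (n : ℕ)
    (ht : ∀ i < n, t i < t (i + 1)) :
    ∃ φ : α → G, ∀ k < n, ∀ u ∈ Icc (t k) (t (k + 1)), φ u - g k u = φ (t k) - g k (t k) := by
  induction n with
  | zero => exact ⟨0, fun k hk => absurd hk k.not_lt_zero⟩
  | succ n ih =>
    obtain ⟨φ, hφ⟩ := ih fun i hi => ht i (by omega)
    refine ⟨fun u => if u ≤ t n then φ u else φ (t n) + g n u - g n (t n), fun k hk u hu => ?_⟩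
    have htk : t k ≤ t n := le_of_forall_lt_succ_of_le_of_le ht (by omega) (by omega)
    rcases Nat.lt_succ_iff_lt_or_eq.1 hk with hk | rfl
    · have hun : u ≤ t n := hu.2.trans (le_of_forall_lt_succ_of_le_of_le ht (by omega) (by omega))
      simp only [if_pos hun, if_pos htk]
      exact hφ k hk u hu
    · by_cases hun : u ≤ t k
      · rw [le_antisymm hun hu.1]
      · simp only [if_neg hun, if_pos le_rfl]
        abel

end Partition

section Topology

variable {α β : Type*} [TopologicalSpace α]

theorem IsPreconnected.apply_eq_of_forall_mem_inter {ι : Type*} [Finite ι] {s : Set α}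
    (hs : IsPreconnected s) {C : ι → Set α} (hC : ∀ k, IsClosed (C k)) (hsC : s ⊆ ⋃ k, C k)
    {g : α → β} (hg : ∀ k, ∀ x ∈ s ∩ C k, ∀ y ∈ s ∩ C k, g x = g y) {x y : α} (hx : x ∈ s)
    (hy : y ∈ s) : g x = g y := by
  by_contra hne
  set good := {k | ∀ z ∈ s ∩ C k, g z = g x}
  have hclosed : ∀ S : Set ι, IsClosed (⋃ k ∈ S, C k) := fun S =>
    S.toFinite.isClosed_biUnion fun k _ => hC k
  have hmem : ∀ z ∈ s, ∀ S : Set ι, (∀ k, z ∈ C k → k ∈ S) → z ∈ ⋃ k ∈ S, C k := by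
    intro z hz S hS
    obtain ⟨k, hk⟩ := mem_iUnion.1 (hsC hz)
    exact mem_biUnion (hS k hk) hk
  obtain ⟨z, hzs, hz, hz'⟩ := isPreconnected_closed_iff.1 hs _ _ (hclosed good) (hclosed goodᶜ)
    (fun z hz => by
      by_cases hzg : ∀ k, z ∈ C k → k ∈ good
      · exact Or.inl (hmem z hz _ hzg)
      · push Not at hzg
        obtain ⟨k, hzk, hk⟩ := hzg
        exact Or.inr (mem_biUnion hk hzk))
    ⟨x, hx, hmem x hx _ fun k hxk z hz => hg k z hz x ⟨hx, hxk⟩⟩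
    ⟨y, hy, hmem y hy _ fun k hyk hk => hne (hk y ⟨hy, hyk⟩).symm⟩
  obtain ⟨k, hk, hzk⟩ := mem_iUnion₂.1 hz
  obtain ⟨k', hk', hzk'⟩ := mem_iUnion₂.1 hz'
  exact hk' fun w hw => (hg k' w hw z ⟨hzs, hzk'⟩).trans (hk z ⟨hzs, hzk⟩)

theorem IsLocallyConstant.apply_eq_of_isPreconnected_subset {S A : Set α} {g : S → β}
    (hg : IsLocallyConstant g) (hA : IsPreconnected A) (hAS : A ⊆ S) {x y : α} (hx : x ∈ A)
    (hy : y ∈ A) : g ⟨x, hAS hx⟩ = g ⟨y, hAS hy⟩ := by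
  have := Subtype.preconnectedSpace hA
  exact (hg.comp_continuous (continuous_inclusion hAS)).apply_eq_of_preconnectedSpace
    ⟨x, hx⟩ ⟨y, hy⟩

theorem exists_partition_mapsTo {X ι : Type*} [TopologicalSpace X] {U : ι → Set X}
    (hU : ∀ i, IsOpen (U i)) (hcov : ∀ x, ∃ i, x ∈ U i) {γ : ℝ → X} {a b : ℝ} (hab : a < b)
    (hγ : ContinuousOn γ (Icc a b)) :
    ∃ (n : ℕ) (t : ℕ → ℝ) (c : ℕ → ι), 0 < n ∧ t 0 = a ∧ t n = b ∧
      (∀ i < n, t i < t (i + 1)) ∧ ∀ i < n, MapsTo γ (Icc (t i) (t (i + 1))) (U (c i)) := by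
  choose V hVo hV using fun i => continuousOn_iff'.1 hγ (U i) (hU i)
  obtain ⟨δ, hδ, hleb⟩ := lebesgue_number_lemma_of_metric isCompact_Icc hVo fun x hx => by
    obtain ⟨i, hi⟩ := hcov (γ x)
    exact mem_iUnion.2 ⟨i, ((hV i).subset ⟨hi, hx⟩).1⟩
  obtain ⟨n, hn⟩ := exists_nat_gt ((b - a) / δ)
  have hn₀ : (0 : ℝ) < n := (div_pos (sub_pos.2 hab) hδ).trans hn
  set ε := (b - a) / n
  have hε : 0 < ε := div_pos (sub_pos.2 hab) hn₀
  have hεδ : ε < δ := by rwa [div_lt_iff₀ hn₀, mul_comm, ← div_lt_iff₀ hδ]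
  have hnε : n * ε = b - a := mul_div_cancel₀ _ hn₀.ne'
  set t : ℕ → ℝ := fun i => a + i * ε
  have ht : ∀ i ≤ n, t i ∈ Icc a b := fun i hi =>
    ⟨le_add_of_nonneg_right (by positivity),
      by nlinarith [show (i : ℝ) ≤ n by exact_mod_cast hi]⟩
  have hpiece : ∀ i, ∃ j, i < n → MapsTo γ (Icc (t i) (t (i + 1))) (U j) := by
    intro i
    by_cases hi : i < n
    · obtain ⟨j, hj⟩ := hleb (t i) (ht i hi.le)
      refine ⟨j, fun _ u hu => ?_⟩
      have hu' : u ∈ Icc a b := ⟨(ht i hi.le).1.trans hu.1, hu.2.trans (ht (i + 1) hi).2⟩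
      have hdist : dist u (t i) < δ := by
        rw [Real.dist_eq, abs_of_nonneg (sub_nonneg.2 hu.1)]
        have : t (i + 1) = t i + ε := by simp only [t]; push_cast; ring
        linarith [hu.2]
      exact ((hV j).superset ⟨hj hdist, hu'⟩).1
    · obtain ⟨j, -⟩ := hcov (γ a)
      exact ⟨j, fun h => absurd h hi⟩
  choose c hc using hpiece
  refine ⟨n, t, c, by exact_mod_cast hn₀, by simp [t], by simp only [t]; linarith, fun i _ => ?_,
    fun i hi => hc i hi⟩
  simp only [t]; push_cast; linarith

end Topology

namespace ClosedOneForm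

variable {X : Type} [TopologicalSpace X]

theorem primitive_add_sub_eq_of_equivalent {ω ω' : ClosedOneForm X} {f : X → ℝ}
    {hf : Continuous f} (h : ω'.Equivalent (ω.addFun f hf)) {γ : ℝ → X} {n : ℕ} {t : ℕ → ℝ}
    {c : ℕ → ω.ι} (hn : 0 < n) (hγ : ContinuousOn γ (Icc (t 0) (t n)))
    (htU : ∀ k < n, MapsTo γ (Icc (t k) (t (k + 1))) (ω.U (c k))) {φ : ℝ → ℝ}
    (hφ : ∀ k < n, ∀ u ∈ Icc (t k) (t (k + 1)),
      φ u - ω.f (c k) (γ u) = φ (t k) - ω.f (c k) (γ (t k)))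
    {lo hi : ℝ} (hsub : Icc lo hi ⊆ Icc (t 0) (t n)) {j : ω'.ι}
    (hj : MapsTo γ (Icc lo hi) (ω'.U j)) {u v : ℝ} (hu : u ∈ Icc lo hi) (hv : v ∈ Icc lo hi) :
    φ u + f (γ u) - ω'.f j (γ u) = φ v + f (γ v) - ω'.f j (γ v) := by
  refine isPreconnected_Icc.apply_eq_of_forall_mem_inter (C := fun k : Fin n =>
    Icc (t k) (t (k + 1))) (g := fun u => φ u + f (γ u) - ω'.f j (γ u))
    (fun _ => isClosed_Icc) (fun w hw => ?_) (fun k x hx y hy => ?_) hu hv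
  · obtain ⟨k, hk, hwk⟩ := exists_lt_of_mem_Icc_partition hn (hsub hw)
    exact mem_iUnion.2 ⟨⟨k, hk⟩, hwk⟩
  have hconn : IsPreconnected (γ '' (Icc lo hi ∩ Icc (t k) (t (k + 1)))) := by
    refine IsPreconnected.image ?_ γ (hγ.mono (inter_subset_left.trans hsub))
    rw [Icc_inter_Icc]
    exact isPreconnected_Icc
  have hU : γ '' (Icc lo hi ∩ Icc (t k) (t (k + 1))) ⊆ ω'.U j ∩ ω.U (c k) :=
    image_subset_iff.2 fun w hw => ⟨hj hw.1, htU k k.2 hw.2⟩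
  have hloc := (h j (c k)).apply_eq_of_isPreconnected_subset hconn hU
    (mem_image_of_mem γ hx) (mem_image_of_mem γ hy)
  have hφx := hφ k k.2 x hx.2
  have hφy := hφ k k.2 y hy.2
  simp only [addFun] at hloc hφx hφy
  linarith

theorem IsIntegralOn.eq_add_sub_of_equivalent {ω ω' : ClosedOneForm X} {f : X → ℝ}
    {hf : Continuous f} (h : ω'.Equivalent (ω.addFun f hf)) {γ : ℝ → X} {a b r r' : ℝ}
    (hγ : ContinuousOn γ (Icc a b)) (hr : ω.IsIntegralOn γ a b r)
    (hr' : ω'.IsIntegralOn γ a b r') : r' = r + f (γ b) - f (γ a) := by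
  obtain ⟨n, t, c, hn, rfl, rfl, ht, htU, rfl⟩ := hr
  obtain ⟨m, s, c', -, hs0, hsm, hs, hsU, rfl⟩ := hr'
  obtain ⟨φ, hφ⟩ := exists_sub_eq_on_partition t (fun k u => ω.f (c k) (γ u)) n ht
  have hφ' : ∀ k < n, ω.f (c k) (γ (t (k + 1))) - ω.f (c k) (γ (t k)) =
      φ (t (k + 1)) - φ (t k) := fun k hk => by
    linarith [hφ k hk (t (k + 1)) ⟨(ht k hk).le, le_rfl⟩]
  have hψ : ∀ j < m, ω'.f (c' j) (γ (s (j + 1))) - ω'.f (c' j) (γ (s j)) =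
      (φ (s (j + 1)) + f (γ (s (j + 1)))) - (φ (s j) + f (γ (s j))) := fun j hj => by
    have hsub : Icc (s j) (s (j + 1)) ⊆ Icc (t 0) (t n) := by
      rw [← hs0, ← hsm]
      exact Icc_subset_Icc (le_of_forall_lt_succ_of_le_of_le hs (Nat.zero_le j) hj.le)
        (le_of_forall_lt_succ_of_le_of_le hs hj le_rfl)
    linarith [primitive_add_sub_eq_of_equivalent h hn hγ htU hφ hsub (hsU j hj)
      ⟨(hs j hj).le, le_rfl⟩ ⟨le_rfl, (hs j hj).le⟩]
  have hr := sum_range_sub_eq_sub_of_forall (g := fun k u => ω.f (c k) (γ u)) hφ'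
  have hr' := sum_range_sub_eq_sub_of_forall (g := fun j u => ω'.f (c' j) (γ u))
    (φ := fun u => φ u + f (γ u)) hψ
  simp only [hs0, hsm] at hr hr' ⊢
  linarith

theorem intOn_self (ω : ClosedOneForm X) (γ : ℝ → X) (a : ℝ) : ω.intOn γ a a = 0 := by
  rw [intOn, dif_neg]
  rintro ⟨r, n, t, c, hn, ht0, htn, ht, -⟩
  have := (ht 0 hn).trans_le (le_of_forall_lt_succ_of_le_of_le ht hn le_rfl)
  rw [ht0, htn] at this
  exact this.false

theorem isIntegralOn_intOn (ω : ClosedOneForm X) {γ : ℝ → X} {a b : ℝ} (hab : a < b)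
    (hγ : ContinuousOn γ (Icc a b)) : ω.IsIntegralOn γ a b (ω.intOn γ a b) := by
  have hex : ∃ r, ω.IsIntegralOn γ a b r := by
    obtain ⟨n, t, c, hn, ht0, htn, ht, htU⟩ := exists_partition_mapsTo ω.isOpen ω.covers hab hγ
    exact ⟨_, n, t, c, hn, ht0, htn, ht, htU, rfl⟩
  rw [intOn, dif_pos hex]
  exact hex.choose_spec

theorem intOn_eq_add_sub_of_equivalent {ω ω' : ClosedOneForm X} {f : X → ℝ}
    {hf : Continuous f} (h : ω'.Equivalent (ω.addFun f hf)) {γ : ℝ → X} {a b : ℝ}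
    (hab : a ≤ b) (hγ : ContinuousOn γ (Icc a b)) :
    ω'.intOn γ a b = ω.intOn γ a b + f (γ b) - f (γ a) := by
  rcases hab.eq_or_lt with rfl | hab
  · simp only [intOn_self]
    ring
  · exact (ω.isIntegralOn_intOn hab hγ).eq_add_sub_of_equivalent h hγ
      (ω'.isIntegralOn_intOn hab hγ)

section Transfer

variable {ω₁ ω₂ : ClosedOneForm X} {F : X → ℝ} {M : ℝ}

theorem IsMovable.of_intOn_eq_add_sub (hF : ∀ x, |F x| ≤ M)
    (hint : ∀ (γ : ℝ → X) (t : ℝ), 0 ≤ t → ContinuousOn γ (Icc 0 t) →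
      ω₂.intOn γ 0 t = ω₁.intOn γ 0 t + F (γ t) - F (γ 0))
    {B D : Set X} {N N' : ℕ} {C : ℝ} (hN : (N : ℝ) + 2 * M ≤ N')
    (hmov : ω₁.IsMovable B D N' C) : ω₂.IsMovable B D N (C + 2 * M) := by
  obtain ⟨hBD, h, hcont, h0, hB, hend, hbd⟩ := hmov
  have hle : ∀ x ∈ D, ∀ t ∈ Icc (0 : ℝ) 1,
      ω₂.intOn (h x) 0 t ≤ ω₁.intOn (h x) 0 t + 2 * M := by
    intro x hx t ht
    have hγ : ContinuousOn (h x) (Icc 0 t) :=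
      (hcont.comp (Continuous.prodMk_right x).continuousOn fun u hu => ⟨hx, hu⟩).mono
        (Icc_subset_Icc_right ht.2)
    rw [hint _ _ ht.1 hγ]
    linarith [(abs_le.1 (hF (h x t))).2, (abs_le.1 (hF (h x 0))).1]
  refine ⟨hBD, h, hcont, h0, hB, fun x hx => (hend x hx).imp id fun hx1 => ?_,
    fun x hx t ht => ?_⟩
  · linarith [hle x hx 1 ⟨zero_le_one, le_rfl⟩]
  · linarith [hle x hx t ht, hbd x hx t ht]

theorem CatCoverProp.of_intOn_eq_add_sub (hF : ∀ x, |F x| ≤ M) (hM : 0 ≤ M)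
    (hint : ∀ (γ : ℝ → X) (t : ℝ), 0 ≤ t → ContinuousOn γ (Icc 0 t) →
      ω₂.intOn γ 0 t = ω₁.intOn γ 0 t + F (γ t) - F (γ 0))
    {B : Set X} {k : ℕ} (hcat : ω₁.CatCoverProp B k) : ω₂.CatCoverProp B k := by
  obtain ⟨C, hC, hcov⟩ := hcat
  refine ⟨C + 2 * M, by positivity, fun N hN => ?_⟩
  obtain ⟨U₀, Ui, hU₀, hUi, hunion, hnull, hmov⟩ := hcov (N + ⌈2 * M⌉₊) (by omega)
  refine ⟨U₀, Ui, hU₀, hUi, hunion, hnull, hmov.of_intOn_eq_add_sub hF hint ?_⟩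
  push_cast
  linarith [Nat.le_ceil (2 * M)]

end Transfer

end ClosedOneForm

theorem catRel_eq_of_equivalent_addFun_general
    {X : Type} [TopologicalSpace X] [CompactSpace X]
    (B : Set X)
    (ω ω' : ClosedOneForm X) (f : X → ℝ) (hf : Continuous f)
    (h : ω'.Equivalent (ω.addFun f hf)) :
    ω.catRel B = ω'.catRel B := by
  set M := ‖BoundedContinuousFunction.mkOfCompact ⟨f, hf⟩‖
  have hM : ∀ x, |f x| ≤ M := (BoundedContinuousFunction.mkOfCompact ⟨f, hf⟩).norm_coe_le_norm
  have hint : ∀ (γ : ℝ → X) (t : ℝ), 0 ≤ t → ContinuousOn γ (Icc 0 t) →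
      ω'.intOn γ 0 t = ω.intOn γ 0 t + f (γ t) - f (γ 0) := fun _ _ ht hγ =>
    ClosedOneForm.intOn_eq_add_sub_of_equivalent h ht hγ
  have hM' : ∀ x, |(-f) x| ≤ M := by simpa only [Pi.neg_apply, abs_neg] using hM
  unfold ClosedOneForm.catRel
  congr 1
  ext k
  refine ⟨ClosedOneForm.CatCoverProp.of_intOn_eq_add_sub hM (norm_nonneg _) hint,
    ClosedOneForm.CatCoverProp.of_intOn_eq_add_sub hM' (norm_nonneg _) fun γ t ht hγ => ?_⟩
  rw [hint γ t ht hγ, Pi.neg_apply, Pi.neg_apply]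
  ring

/-- If `ω'` is equivalent to `ω + df` for some continuous `f : X → ℝ`, then
`cat(X,B,ω) = cat(X,B,ω')`; in particular `cat(X,B,ω)` only depends on the cohomology class
of `ω`. -/
theorem catRel_eq_of_equivalent_addFun
    {X : Type} [TopologicalSpace X] [T2Space X] [CompactSpace X]
    (S : FiniteCWStructure X) (B : Set X) (hB : S.IsSubcomplex B)
    (ω ω' : ClosedOneForm X) (f : X → ℝ) (hf : Continuous f)
    (h : ω'.Equivalent (ω.addFun f hf)) :
    ω.catRel B = ω'.catRel B :=
  catRel_eq_of_equivalent_addFun_general B ω ω' f hf h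
end

section
/- Let (X,B) be a finite CW pair and f : X → ℝ a continuous function. Then cat(X,B,df) = cat(X,B), where df = {f} is the exact continuous closed 1-form determined by f and cat(X,B) is the classical relative Lusternik-Schnirelmann category of the pair (X,B). -/
open Set

/-!
For an exact form `df` the line integral along a path is the increment of `f` between its
endpoints, so on a compact space it is bounded in absolute value by the oscillation of `f`.
Hence choosing `N` larger than the oscillation forces every point of an `(N,C)`-movable set to
end in `B`, and conversely any deformation into `B` is `(N,C)`-movable for every `N` as soon as
`C` dominates the oscillation. The two covering conditions therefore agree for every `k`.
-/

section ExactForm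

variable {X : Type} [TopologicalSpace X]

def DeformsInto (U B : Set X) : Prop :=
  B ⊆ U ∧
  ∃ h : X → ℝ → X,
    ContinuousOn (fun p : X × ℝ => h p.1 p.2) (U ×ˢ Icc (0 : ℝ) 1) ∧
    (∀ x ∈ U, h x 0 = x) ∧
    (∀ t ∈ Icc (0 : ℝ) 1, ∀ b ∈ B, h b t ∈ B) ∧
    (∀ x ∈ U, h x 1 ∈ B)

variable {f : X → ℝ} {hf : Continuous f}

namespace ClosedOneForm

theorem isIntegralOn_ofFun {γ : ℝ → X} {a b r : ℝ} (h : (ofFun f hf).IsIntegralOn γ a b r) :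
    r = f (γ b) - f (γ a) := by
  obtain ⟨n, t, c, -, rfl, rfl, -, -, rfl⟩ := h
  exact Finset.sum_range_sub (fun i => f (γ (t i))) n

/-- `intOn` is `0` when no partition exists, e.g. when `b ≤ a`. -/
theorem intOn_ofFun_eq_zero_or (γ : ℝ → X) (a b : ℝ) :
    (ofFun f hf).intOn γ a b = 0 ∨ (ofFun f hf).intOn γ a b = f (γ b) - f (γ a) := by
  unfold intOn
  split_ifs with h
  · exact Or.inr (isIntegralOn_ofFun h.choose_spec)
  · exact Or.inl rfl

theorem intOn_ofFun_le {D : ℝ} (hD : ∀ x y, f x - f y ≤ D) (γ : ℝ → X) (a b : ℝ) :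
    (ofFun f hf).intOn γ a b ≤ D := by
  rcases intOn_ofFun_eq_zero_or (hf := hf) γ a b with h | h <;> rw [h]
  · simpa using hD (γ a) (γ a)
  · exact hD _ _

theorem neg_le_intOn_ofFun {D : ℝ} (hD : ∀ x y, f x - f y ≤ D) (γ : ℝ → X) (a b : ℝ) :
    -D ≤ (ofFun f hf).intOn γ a b := by
  rcases intOn_ofFun_eq_zero_or (hf := hf) γ a b with h | h <;> rw [h]
  · simpa using hD (γ a) (γ a)
  · linarith [hD (γ a) (γ b)]

theorem IsMovable.deformsInto_of_ofFun {D : ℝ} (hD : ∀ x y, f x - f y ≤ D) {B U : Set X}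
    {N : ℕ} {C : ℝ} (hN : D < N) (hU : (ofFun f hf).IsMovable B U N C) : DeformsInto U B := by
  obtain ⟨hBU, h, hcont, h0, hB, hend, -⟩ := hU
  refine ⟨hBU, h, hcont, h0, hB, fun x hx => (hend x hx).resolve_right fun hle => ?_⟩
  linarith [neg_le_intOn_ofFun (hf := hf) hD (h x) 0 1]

end ClosedOneForm

open ClosedOneForm

theorem DeformsInto.isMovable_ofFun {D : ℝ} (hD : ∀ x y, f x - f y ≤ D) {B U : Set X}
    (N : ℕ) {C : ℝ} (hC : D ≤ C) (hU : DeformsInto U B) : (ofFun f hf).IsMovable B U N C := by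
  obtain ⟨hBU, h, hcont, h0, hB, hend⟩ := hU
  exact ⟨hBU, h, hcont, h0, hB, fun x hx => Or.inl (hend x hx),
    fun x _ t _ => (intOn_ofFun_le hD _ _ _).trans hC⟩

theorem catCoverProp_ofFun_iff {D : ℝ} (hD : ∀ x y, f x - f y ≤ D) (B : Set X) (k : ℕ) :
    (ofFun f hf).CatCoverProp B k ↔ ∃ (U₀ : Set X) (Ui : Fin k → Set X),
      IsOpen U₀ ∧ (∀ i, IsOpen (Ui i)) ∧ U₀ ∪ (⋃ i, Ui i) = univ ∧
      (∀ i, NullhomotopicIncl (Ui i)) ∧ DeformsInto U₀ B := by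
  constructor
  · rintro ⟨C, -, hcover⟩
    obtain ⟨U₀, Ui, hU₀, hUi, hcov, hnull, hmov⟩ := hcover (⌊D⌋₊ + 1) (Nat.succ_pos _)
    refine ⟨U₀, Ui, hU₀, hUi, hcov, hnull, hmov.deformsInto_of_ofFun hD ?_⟩
    exact_mod_cast Nat.lt_floor_add_one D
  · rintro ⟨U₀, Ui, hU₀, hUi, hcov, hnull, hdef⟩
    exact ⟨max 1 D, lt_max_of_lt_left one_pos, fun N _ =>
      ⟨U₀, Ui, hU₀, hUi, hcov, hnull, hdef.isMovable_ofFun hD N (le_max_right _ _)⟩⟩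

end ExactForm

theorem catRel_ofFun_eq_catClassical_general
    {X : Type} [TopologicalSpace X] [CompactSpace X]
    (B : Set X)
    (f : X → ℝ) (hf : Continuous f) :
    (ClosedOneForm.ofFun f hf).catRel B = catClassical X B := by
  obtain ⟨D, hD⟩ := Metric.isBounded_iff.1 (isCompact_range hf).isBounded
  have hosc : ∀ x y, f x - f y ≤ D := fun x y =>
    (le_abs_self _).trans (Real.dist_eq (f x) (f y) ▸ hD ⟨x, rfl⟩ ⟨y, rfl⟩)
  unfold ClosedOneForm.catRel catClassical
  congr 1
  ext k
  exact catCoverProp_ofFun_iff hosc B k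

/-- For an exact continuous closed 1-form `df`, the category
`cat(X,B,df)` coincides with the classical relative Lusternik–Schnirelmann category
`cat(X,B)`. -/
theorem catRel_ofFun_eq_catClassical
    {X : Type} [TopologicalSpace X] [T2Space X] [CompactSpace X]
    (S : FiniteCWStructure X) (B : Set X) (hB : S.IsSubcomplex B)
    (f : X → ℝ) (hf : Continuous f) :
    (ClosedOneForm.ofFun f hf).catRel B = catClassical X B :=
  catRel_ofFun_eq_catClassical_general B f hf
end

section
/- Let ω = {f_U}_{U∈𝒰} be a continuous closed 1-form on a topological space X and γ : [0,1] → X a continuous path. For any two partitions 0 = t_0 < t_1 < ⋯ < t_n = 1 and 0 = s_0 < s_1 < ⋯ < s_m = 1 together with choices U_0, …, U_{n−1} ∈ 𝒰 and V_0, …, V_{m−1} ∈ 𝒰 satisfying γ([t_i, t_{i+1}]) ⊆ U_i for all i and γ([s_j, s_{j+1}]) ⊆ V_j for all j, one has Σ_{i=0}^{n−1} (f_{U_i}(γ(t_{i+1})) − f_{U_i}(γ(t_i))) = Σ_{j=0}^{m−1} (f_{V_j}(γ(s_{j+1})) − f_{V_j}(γ(s_j))). Moreover, at least one such partition with such choices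 exists. Hence the line integral ∫_γ ω is well defined. -/
open Set

/-!
On a subinterval that `γ` maps into `U i ∩ U j`, the difference `f i ∘ γ - f j ∘ γ` is locally
constant on a connected set, hence constant, so the increments of `f i ∘ γ` and `f j ∘ γ` over it
agree. Two partitions have a common refinement, each piece of which lies in the charts of both
partitions; both sums telescope to the sum over that refinement. A partition exists by the
Lebesgue number lemma.
-/

section Order

variable {α : Type*} [LinearOrder α] {x y u v : α}

theorem max_min_eq_or_Icc_subset (hxy : x ≤ y) (huv : u ≤ v) :
    max x (min y u) = max x (min y v) ∨
      Icc (max x (min y u)) (max x (min y v)) ⊆ Icc x y ∩ Icc u v := by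
  grind

/-- Clamping `[u, v]` to `[x, y]` and `[x, y]` to `[u, v]` both give `[x, y] ∩ [u, v]` when the
intervals meet, and a single point otherwise. -/
theorem sub_max_min_comm {β : Type*} [AddCommGroup β] (g : α → β) (hxy : x ≤ y) (huv : u ≤ v) :
    g (max x (min y v)) - g (max x (min y u)) = g (max u (min v y)) - g (max u (min v x)) := by
  grind

theorem sum_range_sub_max_min {β : Type*} [AddCommGroup β] (g : α → β) {s : ℕ → α} {m : ℕ}
    (hxy : x ≤ y) (h0 : s 0 ≤ x) (hm : y ≤ s m) :
    ∑ j ∈ Finset.range m, (g (max x (min y (s (j + 1)))) - g (max x (min y (s j)))) =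
      g y - g x := by
  rw [Finset.sum_range_sub (fun j => g (max x (min y (s j))))]
  simp only [min_eq_left hm, max_eq_right hxy, min_eq_right (h0.trans hxy), max_eq_left h0]

theorem monotoneOn_Iic_of_le_add_one {t : ℕ → α} {n : ℕ} (ht : ∀ i < n, t i ≤ t (i + 1)) :
    MonotoneOn t (Iic n) := by
  intro i _ j hj hij
  induction j, hij using Nat.le_induction with
  | base => rfl
  | succ j _ ih => exact (ih (Nat.le_of_succ_le hj)).trans (ht j hj)

end Order

theorem exists_pos_forall_mapsTo_ball_inter {α X ι : Type*} [PseudoMetricSpace α]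
    [TopologicalSpace X] {K : Set α} (hK : IsCompact K) {γ : α → X} (hγ : ContinuousOn γ K)
    {U : ι → Set X} (hU : ∀ i, IsOpen (U i)) (hcov : ∀ x ∈ K, ∃ i, γ x ∈ U i) :
    ∃ δ > 0, ∀ x ∈ K, ∃ i, MapsTo γ (Metric.ball x δ ∩ K) (U i) := by
  choose W hW hWU using fun i => continuousOn_iff'.1 hγ (U i) (hU i)
  have hKW : K ⊆ ⋃ i, W i := fun x hx => by
    obtain ⟨i, hi⟩ := hcov x hx
    have : x ∈ γ ⁻¹' U i ∩ K := ⟨hi, hx⟩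
    rw [hWU] at this
    exact mem_iUnion.2 ⟨i, this.1⟩
  obtain ⟨δ, hδ, hball⟩ := lebesgue_number_lemma_of_metric hK hW hKW
  refine ⟨δ, hδ, fun x hx => ?_⟩
  obtain ⟨i, hi⟩ := hball x hx
  refine ⟨i, fun z hz => ?_⟩
  have : z ∈ W i ∩ K := ⟨hi hz.1, hz.2⟩
  rw [← hWU] at this
  exact this.1

namespace ClosedOneForm

variable {X : Type} [TopologicalSpace X] (ω : ClosedOneForm X)

theorem sub_eq_sub_of_isPreconnected {S : Set X} (hS : IsPreconnected S) {i j : ω.ι}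
    (hi : S ⊆ ω.U i) (hj : S ⊆ ω.U j) {x y : X} (hx : x ∈ S) (hy : y ∈ S) :
    ω.f i y - ω.f i x = ω.f j y - ω.f j x := by
  have : PreconnectedSpace S := isPreconnected_iff_preconnectedSpace.mp hS
  have hlc : IsLocallyConstant (fun z : S => ω.f i z - ω.f j z) :=
    (ω.locConst i j).comp_continuous
      (f := fun z : S => (⟨z, hi z.2, hj z.2⟩ : ↥(ω.U i ∩ ω.U j)))
      (continuous_subtype_val.subtype_mk _)
  have := hlc.apply_eq_of_preconnectedSpace ⟨y, hy⟩ ⟨x, hx⟩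
  dsimp only at this
  linarith

theorem sub_eq_sub_of_mapsTo_Icc {γ : ℝ → X} {x y : ℝ} (hxy : x ≤ y)
    (hγ : ContinuousOn γ (Icc x y)) {i j : ω.ι} (hi : MapsTo γ (Icc x y) (ω.U i))
    (hj : MapsTo γ (Icc x y) (ω.U j)) :
    ω.f i (γ y) - ω.f i (γ x) = ω.f j (γ y) - ω.f j (γ x) :=
  ω.sub_eq_sub_of_isPreconnected (isPreconnected_Icc.image γ hγ) hi.image_subset hj.image_subset
    (mem_image_of_mem γ (left_mem_Icc.2 hxy)) (mem_image_of_mem γ (right_mem_Icc.2 hxy))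

theorem exists_isIntegralOn {γ : ℝ → X} {a b : ℝ} (hab : a < b)
    (hγ : ContinuousOn γ (Icc a b)) : ∃ r, ω.IsIntegralOn γ a b r := by
  obtain ⟨δ, hδ, hball⟩ := exists_pos_forall_mapsTo_ball_inter isCompact_Icc hγ ω.isOpen
    fun x _ => ω.covers (γ x)
  obtain ⟨n, hn⟩ := exists_nat_gt ((b - a) / δ)
  have hn₀ : (0 : ℝ) < n := (div_pos (sub_pos.2 hab) hδ).trans hn
  set h := (b - a) / n with h_def
  have hh : 0 < h := div_pos (sub_pos.2 hab) hn₀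
  have hhδ : h < δ := by rwa [h_def, div_lt_iff₀ hn₀, mul_comm, ← div_lt_iff₀ hδ]
  set t : ℕ → ℝ := fun k => a + k * h
  have ht_succ (k : ℕ) : t (k + 1) = t k + h := by simp only [t]; push_cast; ring
  have ht_mem {k : ℕ} (hk : k ≤ n) : t k ∈ Icc a b := by
    refine ⟨le_add_of_nonneg_right (by positivity), ?_⟩
    calc t k ≤ a + n * h := by
          simp only [t]; gcongr
      _ = b := by rw [h_def, mul_div_cancel₀ _ hn₀.ne']; ring
  obtain ⟨i₀, -⟩ := ω.covers (γ a)
  have hchart (k : ℕ) : ∃ i, k < n → MapsTo γ (Icc (t k) (t (k + 1))) (ω.U i) := by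
    by_cases hk : k < n
    · obtain ⟨i, hi⟩ := hball (t k) (ht_mem hk.le)
      refine ⟨i, fun _ => hi.mono_left fun z hz => ⟨?_, ?_⟩⟩
      · rw [Metric.mem_ball, Real.dist_eq, abs_of_nonneg (sub_nonneg.2 hz.1)]
        linarith [hz.2, ht_succ k]
      · exact ⟨(ht_mem hk.le).1.trans hz.1, hz.2.trans (ht_mem hk).2⟩
    · exact ⟨i₀, fun hk' => absurd hk' hk⟩
  choose c hc using hchart
  refine ⟨_, n, t, c, Nat.cast_pos.1 hn₀, by simp [t], ?_, fun k _ => ?_, hc, rfl⟩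
  · simp only [t, h_def]; field_simp; ring
  · rw [ht_succ]; linarith

structure IsSubordinatePartition (γ : ℝ → X) (a b : ℝ) (n : ℕ) (t : ℕ → ℝ) (c : ℕ → ω.ι) :
    Prop where
  first : t 0 = a
  last : t n = b
  mono : ∀ i < n, t i ≤ t (i + 1)
  mapsTo : ∀ i < n, MapsTo γ (Icc (t i) (t (i + 1))) (ω.U (c i))

def partitionSum (γ : ℝ → X) (n : ℕ) (t : ℕ → ℝ) (c : ℕ → ω.ι) : ℝ :=
  ∑ i ∈ Finset.range n, (ω.f (c i) (γ (t (i + 1))) - ω.f (c i) (γ (t i)))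

namespace IsSubordinatePartition

variable {ω} {γ : ℝ → X} {a b : ℝ} {n : ℕ} {t : ℕ → ℝ} {c : ℕ → ω.ι}

theorem mem_Icc (ht : ω.IsSubordinatePartition γ a b n t c) {i : ℕ} (hi : i ≤ n) :
    t i ∈ Icc a b := by
  have hmono := monotoneOn_Iic_of_le_add_one ht.mono
  rw [← ht.first, ← ht.last]
  exact ⟨hmono (Nat.zero_le n) hi (Nat.zero_le i), hmono hi (le_refl n) hi⟩

theorem Icc_subset (ht : ω.IsSubordinatePartition γ a b n t c) {i : ℕ} (hi : i < n) :
    Icc (t i) (t (i + 1)) ⊆ Icc a b :=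
  Icc_subset_Icc (ht.mem_Icc hi.le).1 (ht.mem_Icc hi).2

/-- The pieces of the common refinement are `[s j, s (j + 1)]` clamped to `[t i, t (i + 1)]`,
or equivalently `[t i, t (i + 1)]` clamped to `[s j, s (j + 1)]` (`sub_max_min_comm`). -/
theorem partitionSum_eq {m : ℕ} {s : ℕ → ℝ} {d : ℕ → ω.ι} (hγ : ContinuousOn γ (Icc a b))
    (ht : ω.IsSubordinatePartition γ a b n t c) (hs : ω.IsSubordinatePartition γ a b m s d) :
    ω.partitionSum γ n t c = ω.partitionSum γ m s d := by
  set A : ℕ → ℕ → ℝ := fun i j => max (t i) (min (t (i + 1)) (s j))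
  set B : ℕ → ℕ → ℝ := fun j i => max (s j) (min (s (j + 1)) (t i))
  have hchart : ∀ i < n, ∀ j < m, ω.f (c i) (γ (A i (j + 1))) - ω.f (c i) (γ (A i j)) =
      ω.f (d j) (γ (A i (j + 1))) - ω.f (d j) (γ (A i j)) := by
    intro i hi j hj
    rcases max_min_eq_or_Icc_subset (ht.mono i hi) (hs.mono j hj) with heq | hsub
    · simp only [A, heq, sub_self]
    exact ω.sub_eq_sub_of_mapsTo_Icc (max_le_max le_rfl (min_le_min le_rfl (hs.mono j hj)))
      (hγ.mono ((hsub.trans inter_subset_left).trans (ht.Icc_subset hi)))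
      ((ht.mapsTo i hi).mono_left (hsub.trans inter_subset_left))
      ((hs.mapsTo j hj).mono_left (hsub.trans inter_subset_right))
  calc ω.partitionSum γ n t c
      = ∑ i ∈ Finset.range n, ∑ j ∈ Finset.range m,
          (ω.f (c i) (γ (A i (j + 1))) - ω.f (c i) (γ (A i j))) := by
        refine Finset.sum_congr rfl fun i hi => ?_
        have hi := Finset.mem_range.1 hi
        exact (sum_range_sub_max_min (fun x => ω.f (c i) (γ x)) (ht.mono i hi)
          (hs.first.trans_le (ht.mem_Icc hi.le).1) ((ht.mem_Icc hi).2.trans_eq hs.last.symm)).symm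
    _ = ∑ i ∈ Finset.range n, ∑ j ∈ Finset.range m,
          (ω.f (d j) (γ (A i (j + 1))) - ω.f (d j) (γ (A i j))) :=
        Finset.sum_congr rfl fun i hi => Finset.sum_congr rfl fun j hj =>
          hchart i (Finset.mem_range.1 hi) j (Finset.mem_range.1 hj)
    _ = ∑ i ∈ Finset.range n, ∑ j ∈ Finset.range m,
          (ω.f (d j) (γ (B j (i + 1))) - ω.f (d j) (γ (B j i))) :=
        Finset.sum_congr rfl fun i hi => Finset.sum_congr rfl fun j hj =>
          sub_max_min_comm (fun x => ω.f (d j) (γ x)) (ht.mono i (Finset.mem_range.1 hi))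
            (hs.mono j (Finset.mem_range.1 hj))
    _ = ∑ j ∈ Finset.range m, ∑ i ∈ Finset.range n,
          (ω.f (d j) (γ (B j (i + 1))) - ω.f (d j) (γ (B j i))) := Finset.sum_comm
    _ = ω.partitionSum γ m s d := by
        refine Finset.sum_congr rfl fun j hj => ?_
        have hj := Finset.mem_range.1 hj
        exact sum_range_sub_max_min (fun x => ω.f (d j) (γ x)) (hs.mono j hj)
          (ht.first.trans_le (hs.mem_Icc hj.le).1) ((hs.mem_Icc hj).2.trans_eq ht.last.symm)

end IsSubordinatePartition

end ClosedOneForm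

/-- Well-definedness of the line integral: for a continuous path
`γ : [0,1] → X` there exists a partition with admissible choices of cover members, and any
two such partitions give the same sum.  (In `ClosedOneForm.IsIntegralOn`, the real number `r`
is by definition the sum `Σ_i (f_{U_i}(γ(t_{i+1})) − f_{U_i}(γ(t_i)))` over a partition
`0 = t_0 < ⋯ < t_n = 1` with `γ([t_i,t_{i+1}]) ⊆ U_i`.) -/
theorem lineIntegral_wellDefined
    {X : Type} [TopologicalSpace X] (ω : ClosedOneForm X)
    (γ : ℝ → X) (hγ : ContinuousOn γ (Set.Icc 0 1)) :
    (∃ r : ℝ, ω.IsIntegralOn γ 0 1 r) ∧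
      (∀ r s : ℝ, ω.IsIntegralOn γ 0 1 r → ω.IsIntegralOn γ 0 1 s → r = s) := by
  refine ⟨ω.exists_isIntegralOn zero_lt_one hγ, ?_⟩
  rintro _ _ ⟨n, t, c, -, ht₀, htₙ, ht, htU, rfl⟩ ⟨m, s, d, -, hs₀, hsₘ, hs, hsU, rfl⟩
  exact ClosedOneForm.IsSubordinatePartition.partitionSum_eq hγ
    ⟨ht₀, htₙ, fun i hi => (ht i hi).le, htU⟩ ⟨hs₀, hsₘ, fun i hi => (hs i hi).le, hsU⟩
end

section
/- Let ω be a continuous closed 1-form on a topological space X, and let γ_0, γ_1 : [0,1] → X be continuous paths with γ_0(0) = γ_1(0) and γ_0(1) = γ_1(1). If γ_0 and γ_1 are homotopic relative to their endpoints, then ∫_{γ_0} ω = ∫_{γ_1} ω. -/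
open Set

/-!
The partition sum defining the line integral is independent of the partition: gluing the local
primitives along one partition gives a function whose increment over any interval lying in a chart
is the increment of that chart's primitive, so the sum over any other partition telescopes to the
same value.

For the homotopy, a Lebesgue number of the cover pulled back to the square yields one uniform
partition that is adapted to every slice `H s` with `s` near a given `s₀`. By Abel summation the
corresponding sum depends on `s` only through the endpoints, which are fixed, and through the
differences of neighbouring charts at the vertices, which are locally constant. Hence the integral
along `H s` is locally constant in `s`, and so constant on the connected interval `[0, 1]`.
-/

open Filter Topology

lemma IsPreconnected.apply_eq_of_forall_eventually_eq {α β : Type*} [TopologicalSpace α]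
    {s : Set α} (hs : IsPreconnected s) {f : α → β} (hf : ∀ x ∈ s, ∀ᶠ y in 𝓝[s] x, f y = f x)
    {x y : α} (hx : x ∈ s) (hy : y ∈ s) : f x = f y := by
  have : PreconnectedSpace s := isPreconnected_iff_preconnectedSpace.1 hs
  have hlc : IsLocallyConstant (s.domRestrict f) := (IsLocallyConstant.iff_eventually_eq _).2
    fun z => (eventually_nhds_subtype_iff s z (fun w => f w = f z)).2 (hf z z.2)
  exact hlc.apply_eq_of_preconnectedSpace ⟨x, hx⟩ ⟨y, hy⟩

lemma Finset.sum_range_sub_eq_add_sum {M : Type*} [AddCommGroup M] (F : ℕ → ℕ → M) (n : ℕ) :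
    ∑ k ∈ Finset.range n, (F k (k + 1) - F k k) =
      F n n - F 0 0 + ∑ k ∈ Finset.range n, (F k (k + 1) - F (k + 1) (k + 1)) := by
  rw [← Finset.sum_range_sub (fun k => F k k), ← Finset.sum_add_distrib]
  exact Finset.sum_congr rfl fun k _ => by abel

lemma mem_Icc_of_lt_succ {n : ℕ} {t : ℕ → ℝ} {a b : ℝ} (ht0 : t 0 = a) (htn : t n = b)
    (ht : ∀ i < n, t i < t (i + 1)) {i : ℕ} (hi : i ≤ n) : t i ∈ Icc a b := by
  have hmono : MonotoneOn t (Iic n) :=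
    (strictMonoOn_Iic_of_lt_succ fun m hm => by simpa using ht m hm).monotoneOn
  exact ⟨ht0 ▸ hmono (Nat.zero_le n) hi (Nat.zero_le i), htn ▸ hmono hi (le_refl n) hi⟩

namespace ClosedOneForm

variable {X : Type} [TopologicalSpace X] (ω : ClosedOneForm X)

lemma sub_eq_sub_of_mapsTo_inter {Y : Type*} [TopologicalSpace Y] {S : Set Y}
    (hS : IsPreconnected S) {γ : Y → X} (hγ : ContinuousOn γ S) {i j : ω.ι}
    (h : MapsTo γ S (ω.U i ∩ ω.U j)) {x y : Y} (hx : x ∈ S) (hy : y ∈ S) :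
    ω.f i (γ y) - ω.f i (γ x) = ω.f j (γ y) - ω.f j (γ x) := by
  have : PreconnectedSpace S := isPreconnected_iff_preconnectedSpace.1 hS
  have hlc := (ω.locConst i j).comp_continuous
    ((continuousOn_iff_continuous_domRestrict.1 hγ).subtype_mk fun z => h z.2)
  have := hlc.apply_eq_of_preconnectedSpace ⟨x, hx⟩ ⟨y, hy⟩
  simp only [Function.comp_apply, domRestrict_apply] at this
  linarith

lemma eventually_sub_eq {i j : ω.ι} {y₀ : X} (hi : y₀ ∈ ω.U i) (hj : y₀ ∈ ω.U j) :
    ∀ᶠ y in 𝓝 y₀, ω.f i y - ω.f j y = ω.f i y₀ - ω.f j y₀ := by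
  have hopen := (ω.isOpen i).inter (ω.isOpen j)
  have := (eventually_nhds_subtype_iff (ω.U i ∩ ω.U j) ⟨y₀, hi, hj⟩
    (fun y => ω.f i y - ω.f j y = _)).1 ((ω.locConst i j).eventually_eq ⟨y₀, hi, hj⟩)
  rwa [hopen.nhdsWithin_eq ⟨hi, hj⟩] at this

/-- Both sides are the increment over `[p, q] ∩ [α, β]` (zero if it is empty), measured in the
chart `i` and in the chart `j` respectively. -/
lemma sub_clamp_eq_sub_clamp {γ : ℝ → X} {p q α β : ℝ} (hpq : p ≤ q) (hαβ : α ≤ β)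
    (hγ : ContinuousOn γ (Icc p q ∩ Icc α β)) {i j : ω.ι}
    (hi : MapsTo γ (Icc p q) (ω.U i)) (hj : MapsTo γ (Icc α β) (ω.U j)) :
    ω.f i (γ (max p (min β q))) - ω.f i (γ (max p (min α q))) =
      ω.f j (γ (max α (min q β))) - ω.f j (γ (max α (min p β))) := by
  rcases le_or_gt β p with hβp | hpβ
  · simp [hβp, hαβ.trans hβp, hβp.trans hpq, hαβ]
  rcases le_or_gt q α with hqα | hαq
  · simp [hqα, hqα.trans hαβ, hpq.trans hqα, hpq.trans (hqα.trans hαβ)]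
  have hA : max p α ≤ min q β := max_le (le_min hpq hpβ.le) (le_min hαq.le hαβ)
  have hsub : Icc (max p α) (min q β) = Icc p q ∩ Icc α β := Icc_inter_Icc.symm
  have key := ω.sub_eq_sub_of_mapsTo_inter isPreconnected_Icc (hsub ▸ hγ)
    (fun x hx => ⟨hi (hsub ▸ hx).1, hj (hsub ▸ hx).2⟩) (left_mem_Icc.2 hA) (right_mem_Icc.2 hA)
  rwa [max_eq_right (le_min hpβ.le hpq), min_comm, min_eq_left hαq.le,
    max_eq_right (le_min hαq.le hαβ), min_eq_left hpβ.le, max_comm α p]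

/-- Up to a constant, a primitive of `ω` along `γ` on `[t 0, t n]`: the local primitive on the
`i`-th piece is evaluated at `x` clamped to that piece. -/
def partitionPrimitive (γ : ℝ → X) (n : ℕ) (t : ℕ → ℝ) (c : ℕ → ω.ι) (x : ℝ) : ℝ :=
  ∑ i ∈ Finset.range n, ω.f (c i) (γ (max (t i) (min x (t (i + 1)))))

lemma partitionPrimitive_sub {γ : ℝ → X} {a b : ℝ} (hγ : ContinuousOn γ (Icc a b))
    {n : ℕ} {t : ℕ → ℝ} {c : ℕ → ω.ι} (ht0 : t 0 = a) (htn : t n = b)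
    (ht : ∀ i < n, t i < t (i + 1)) (hmaps : ∀ i < n, MapsTo γ (Icc (t i) (t (i + 1))) (ω.U (c i)))
    {α β : ℝ} (hα : a ≤ α) (hαβ : α ≤ β) (hβ : β ≤ b) {j : ω.ι}
    (hj : MapsTo γ (Icc α β) (ω.U j)) :
    ω.partitionPrimitive γ n t c β - ω.partitionPrimitive γ n t c α =
      ω.f j (γ β) - ω.f j (γ α) := by
  rw [partitionPrimitive, partitionPrimitive, ← Finset.sum_sub_distrib,
    Finset.sum_congr rfl fun i hi => ω.sub_clamp_eq_sub_clamp (ht i (Finset.mem_range.1 hi)).le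
      hαβ (hγ.mono (inter_subset_right.trans (Icc_subset_Icc hα hβ)))
      (hmaps i (Finset.mem_range.1 hi)) hj,
    Finset.sum_range_sub (fun k => ω.f j (γ (max α (min (t k) β)))), htn, ht0,
    min_eq_right hβ, max_eq_right hαβ, min_eq_left (hα.trans hαβ), max_eq_left hα]

variable {ω}

lemma IsIntegralOn.unique {γ : ℝ → X} {a b r r' : ℝ} (hγ : ContinuousOn γ (Icc a b))
    (h : ω.IsIntegralOn γ a b r) (h' : ω.IsIntegralOn γ a b r') : r = r' := by
  obtain ⟨n, t, c, -, ht0, htn, ht, hmaps, rfl⟩ := h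
  obtain ⟨m, s, d, -, hs0, hsm, hs, hmaps', rfl⟩ := h'
  have hmem := fun i (hi : i ≤ m) => mem_Icc_of_lt_succ hs0 hsm hs hi
  calc ∑ i ∈ Finset.range n, (ω.f (c i) (γ (t (i + 1))) - ω.f (c i) (γ (t i)))
      = ω.partitionPrimitive γ n t c b - ω.partitionPrimitive γ n t c a := by
        rw [partitionPrimitive, partitionPrimitive, ← Finset.sum_sub_distrib]
        refine Finset.sum_congr rfl fun i hi => ?_
        have hi := Finset.mem_range.1 hi
        have hai := (mem_Icc_of_lt_succ ht0 htn ht hi.le).1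
        have hib := (mem_Icc_of_lt_succ ht0 htn ht hi).2
        rw [min_eq_right hib, max_eq_right (ht i hi).le, min_eq_left (hai.trans (ht i hi).le),
          max_eq_left hai]
    _ = ∑ k ∈ Finset.range m,
          (ω.partitionPrimitive γ n t c (s (k + 1)) - ω.partitionPrimitive γ n t c (s k)) := by
        rw [Finset.sum_range_sub (fun k => ω.partitionPrimitive γ n t c (s k)), hs0, hsm]
    _ = _ := Finset.sum_congr rfl fun k hk => by
        have hk := Finset.mem_range.1 hk
        exact ω.partitionPrimitive_sub hγ ht0 htn ht hmaps (hmem k hk.le).1 (hs k hk).le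
          (hmem (k + 1) hk).2 (hmaps' k hk)

lemma intOn_eq_of_isIntegralOn {γ : ℝ → X} {a b r : ℝ} (hγ : ContinuousOn γ (Icc a b))
    (h : ω.IsIntegralOn γ a b r) : ω.intOn γ a b = r := by
  have hex : ∃ r, ω.IsIntegralOn γ a b r := ⟨r, h⟩
  rw [intOn, dif_pos hex]
  exact hex.choose_spec.unique hγ h

lemma IsIntegralOn.congr {γ γ' : ℝ → X} {a b r : ℝ} (hr : ω.IsIntegralOn γ a b r)
    (h : EqOn γ γ' (Icc a b)) : ω.IsIntegralOn γ' a b r := by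
  obtain ⟨n, t, c, hn, ht0, htn, ht, hmaps, rfl⟩ := hr
  have hmem := fun i (hi : i ≤ n) => mem_Icc_of_lt_succ ht0 htn ht hi
  refine ⟨n, t, c, hn, ht0, htn, ht, fun i hi x hx => ?_, Finset.sum_congr rfl fun i hi => ?_⟩
  · rw [← h (Icc_subset_Icc (hmem i hi.le).1 (hmem (i + 1) hi).2 hx)]
    exact hmaps i hi hx
  · have hi := Finset.mem_range.1 hi
    rw [h (hmem i hi.le), h (hmem (i + 1) hi)]

lemma intOn_congr {γ γ' : ℝ → X} {a b : ℝ} (h : EqOn γ γ' (Icc a b)) :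
    ω.intOn γ a b = ω.intOn γ' a b := by
  have : ω.IsIntegralOn γ a b = ω.IsIntegralOn γ' a b :=
    funext fun r => propext ⟨fun hr => hr.congr h, fun hr => hr.congr h.symm⟩
  unfold intOn
  rw [this]

variable (ω)

lemma exists_lebesgue_number_of_continuousOn {α : Type*} [PseudoMetricSpace α] {K : Set α}
    (hK : IsCompact K) {g : α → X} (hg : ContinuousOn g K) :
    ∃ δ > 0, ∀ x ∈ K, ∃ i, ∀ y ∈ K, dist y x < δ → g y ∈ ω.U i := by
  choose V hV hVeq using fun i => continuousOn_iff'.1 hg (ω.U i) (ω.isOpen i)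
  obtain ⟨δ, hδ, hball⟩ := lebesgue_number_lemma_of_metric hK hV fun x hx => by
    obtain ⟨i, hi⟩ := ω.covers (g x)
    exact mem_iUnion.2 ⟨i, ((hVeq i).subset ⟨hi, hx⟩).1⟩
  refine ⟨δ, hδ, fun x hx => ?_⟩
  obtain ⟨i, hi⟩ := hball x hx
  exact ⟨i, fun y hy hyx => ((hVeq i).symm.subset ⟨hi hyx, hy⟩).1⟩

lemma isIntegralOn_uniform {γ : ℝ → X} {N : ℕ} (hN : 0 < N) {c : ℕ → ω.ι}
    (hmaps : ∀ k < N, MapsTo γ (Icc ((k : ℝ) / N) (((k + 1 : ℕ) : ℝ) / N)) (ω.U (c k))) :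
    ω.IsIntegralOn γ 0 1 (∑ k ∈ Finset.range N,
      (ω.f (c k) (γ (((k + 1 : ℕ) : ℝ) / N)) - ω.f (c k) (γ ((k : ℝ) / N)))) :=
  ⟨N, fun k => (k : ℝ) / N, c, hN, by simp, div_self (by positivity),
    fun k _ => div_lt_div_of_pos_right (by push_cast; linarith) (by positivity), hmaps, rfl⟩

variable {H : ℝ → ℝ → X}

lemma exists_uniform_charts
    (hH : ContinuousOn (fun p : ℝ × ℝ => H p.1 p.2) (Icc (0 : ℝ) 1 ×ˢ Icc (0 : ℝ) 1))
    {s₀ : ℝ} (hs₀ : s₀ ∈ Icc (0 : ℝ) 1) :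
    ∃ (N : ℕ) (c : ℕ → ω.ι), 0 < N ∧ ∀ᶠ s in 𝓝[Icc 0 1] s₀,
      ∀ k ≤ N, ∀ u ∈ Icc (0 : ℝ) 1, |u - k / N| ≤ 1 / N → H s u ∈ ω.U (c k) := by
  obtain ⟨δ, hδ, hcharts⟩ :=
    ω.exists_lebesgue_number_of_continuousOn (isCompact_Icc.prod isCompact_Icc) hH
  obtain ⟨N, hN⟩ := exists_nat_one_div_lt hδ
  obtain ⟨i₀, -⟩ := ω.covers (H s₀ 0)
  have hc : ∀ k : ℕ, ∃ i, k ≤ N + 1 → ∀ q ∈ Icc (0 : ℝ) 1 ×ˢ Icc (0 : ℝ) 1,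
      dist q (s₀, k / (N + 1 : ℝ)) < δ → H q.1 q.2 ∈ ω.U i := fun k => by
    by_cases hk : k ≤ N + 1
    · have hkN : (k : ℝ) ≤ N + 1 := by exact_mod_cast hk
      obtain ⟨i, hi⟩ := hcharts (s₀, k / (N + 1 : ℝ))
        ⟨hs₀, by positivity, (div_le_one (by positivity)).2 hkN⟩
      exact ⟨i, fun _ => hi⟩
    · exact ⟨i₀, fun h => absurd h hk⟩
  choose c hc using hc
  refine ⟨N + 1, c, N.succ_pos, ?_⟩
  filter_upwards [self_mem_nhdsWithin, nhdsWithin_le_nhds (Metric.ball_mem_nhds s₀ hδ)]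
    with s hs hsδ k hk u hu hku
  refine hc k hk (s, u) ⟨hs, hu⟩ (max_lt hsδ ?_)
  rw [Real.dist_eq]
  push_cast at hku
  linarith

lemma exists_eventually_isIntegralOn
    (hH : ContinuousOn (fun p : ℝ × ℝ => H p.1 p.2) (Icc (0 : ℝ) 1 ×ˢ Icc (0 : ℝ) 1))
    {x₀ x₁ : X} (hleft : ∀ s ∈ Icc (0 : ℝ) 1, H s 0 = x₀) (hright : ∀ s ∈ Icc (0 : ℝ) 1, H s 1 = x₁)
    {s₀ : ℝ} (hs₀ : s₀ ∈ Icc (0 : ℝ) 1) :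
    ∃ r, ∀ᶠ s in 𝓝[Icc 0 1] s₀, ω.IsIntegralOn (H s) 0 1 r := by
  obtain ⟨N, c, hN, hcharts⟩ := ω.exists_uniform_charts hH hs₀
  have hNpos : (0 : ℝ) < N := by exact_mod_cast hN
  have hgrid : ∀ k ≤ N, (k : ℝ) / N ∈ Icc (0 : ℝ) 1 := fun k hk =>
    ⟨by positivity, (div_le_one hNpos).2 (by exact_mod_cast hk)⟩
  have hstep : ∀ k : ℕ, ((k + 1 : ℕ) : ℝ) / N - k / N = 1 / N := fun k => by push_cast; ring
  set σ : ℝ → ℝ := fun s => ∑ k ∈ Finset.range N,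
    (ω.f (c k) (H s (((k + 1 : ℕ) : ℝ) / N)) - ω.f (c k) (H s ((k : ℝ) / N)))
  have hslice : ∀ᶠ s in 𝓝[Icc 0 1] s₀, ω.IsIntegralOn (H s) 0 1 (σ s) :=
    hcharts.mono fun s hs => ω.isIntegralOn_uniform hN fun k hk u hu =>
      hs k hk.le u ⟨(hgrid k hk.le).1.trans hu.1, hu.2.trans (hgrid (k + 1) hk).2⟩
        (by rw [abs_of_nonneg (sub_nonneg.2 hu.1)]; linarith [hu.2, hstep k])
  have hσ_eq : ∀ s ∈ Icc (0 : ℝ) 1, σ s = ω.f (c N) x₁ - ω.f (c 0) x₀ +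
      ∑ k ∈ Finset.range N, (ω.f (c k) (H s (((k + 1 : ℕ) : ℝ) / N)) -
        ω.f (c (k + 1)) (H s (((k + 1 : ℕ) : ℝ) / N))) := fun s hs => by
    have e := Finset.sum_range_sub_eq_add_sum (fun k l => ω.f (c k) (H s ((l : ℝ) / N))) N
    beta_reduce at e
    rw [show σ s = _ from e, div_self hNpos.ne', Nat.cast_zero, zero_div, hleft s hs, hright s hs]
  have hvertex : ∀ k ∈ Finset.range N, ∀ᶠ s in 𝓝[Icc 0 1] s₀,
      ω.f (c k) (H s (((k + 1 : ℕ) : ℝ) / N)) - ω.f (c (k + 1)) (H s (((k + 1 : ℕ) : ℝ) / N)) =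
        ω.f (c k) (H s₀ (((k + 1 : ℕ) : ℝ) / N)) -
          ω.f (c (k + 1)) (H s₀ (((k + 1 : ℕ) : ℝ) / N)) := fun k hk => by
    have hk := Finset.mem_range.1 hk
    have h₀ := hcharts.self_of_nhdsWithin hs₀
    have hcont := hH.uncurry_right _ (hgrid (k + 1) hk) s₀ hs₀
    refine hcont.tendsto.eventually (ω.eventually_sub_eq ?_ ?_)
    · exact h₀ k hk.le _ (hgrid (k + 1) hk) (by rw [hstep, abs_of_pos (by positivity)])
    · exact h₀ (k + 1) hk _ (hgrid (k + 1) hk) (by simp [hNpos.le])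
  have hσ : ∀ᶠ s in 𝓝[Icc 0 1] s₀, σ s = σ s₀ := by
    filter_upwards [self_mem_nhdsWithin, (Finset.eventually_all _).2 hvertex] with s hs hv
    rw [hσ_eq s hs, hσ_eq s₀ hs₀, Finset.sum_congr rfl hv]
  exact ⟨σ s₀, (hslice.and hσ).mono fun s hs => hs.2 ▸ hs.1⟩

lemma eventually_intOn_eq
    (hH : ContinuousOn (fun p : ℝ × ℝ => H p.1 p.2) (Icc (0 : ℝ) 1 ×ˢ Icc (0 : ℝ) 1))
    {x₀ x₁ : X} (hleft : ∀ s ∈ Icc (0 : ℝ) 1, H s 0 = x₀) (hright : ∀ s ∈ Icc (0 : ℝ) 1, H s 1 = x₁)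
    {s₀ : ℝ} (hs₀ : s₀ ∈ Icc (0 : ℝ) 1) :
    ∀ᶠ s in 𝓝[Icc 0 1] s₀, ω.intOn (H s) 0 1 = ω.intOn (H s₀) 0 1 := by
  obtain ⟨r, hr⟩ := ω.exists_eventually_isIntegralOn hH hleft hright hs₀
  rw [intOn_eq_of_isIntegralOn (hH.uncurry_left s₀ hs₀) (hr.self_of_nhdsWithin hs₀)]
  filter_upwards [self_mem_nhdsWithin, hr] with s hs hrs
  exact intOn_eq_of_isIntegralOn (hH.uncurry_left s hs) hrs

end ClosedOneForm

theorem intOn_eq_of_homotopic_rel_endpoints_general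
    {X : Type} [TopologicalSpace X] (ω : ClosedOneForm X)
    (γ₀ γ₁ : ℝ → X)
    (H : ℝ → ℝ → X)
    (hH : ContinuousOn (fun p : ℝ × ℝ => H p.1 p.2)
      (Set.Icc (0 : ℝ) 1 ×ˢ Set.Icc (0 : ℝ) 1))
    (hH0 : ∀ t ∈ Set.Icc (0 : ℝ) 1, H 0 t = γ₀ t)
    (hH1 : ∀ t ∈ Set.Icc (0 : ℝ) 1, H 1 t = γ₁ t)
    (hHleft : ∀ s ∈ Set.Icc (0 : ℝ) 1, H s 0 = γ₀ 0)
    (hHright : ∀ s ∈ Set.Icc (0 : ℝ) 1, H s 1 = γ₀ 1) :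
    ω.intOn γ₀ 0 1 = ω.intOn γ₁ 0 1 := by
  have h01 : ω.intOn (H 0) 0 1 = ω.intOn (H 1) 0 1 :=
    isPreconnected_Icc.apply_eq_of_forall_eventually_eq
      (fun s₀ hs₀ => ω.eventually_intOn_eq hH hHleft hHright hs₀)
      (left_mem_Icc.2 zero_le_one) (right_mem_Icc.2 zero_le_one)
  rwa [ω.intOn_congr fun t ht => hH0 t ht, ω.intOn_congr fun t ht => hH1 t ht] at h01

/-- The line integral only depends on the homotopy class of the path
relative to its endpoints. -/
theorem intOn_eq_of_homotopic_rel_endpoints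
    {X : Type} [TopologicalSpace X] (ω : ClosedOneForm X)
    (γ₀ γ₁ : ℝ → X)
    (hγ₀ : ContinuousOn γ₀ (Set.Icc 0 1)) (hγ₁ : ContinuousOn γ₁ (Set.Icc 0 1))
    (h0 : γ₀ 0 = γ₁ 0) (h1 : γ₀ 1 = γ₁ 1)
    (H : ℝ → ℝ → X)
    (hH : ContinuousOn (fun p : ℝ × ℝ => H p.1 p.2)
      (Set.Icc (0 : ℝ) 1 ×ˢ Set.Icc (0 : ℝ) 1))
    (hH0 : ∀ t ∈ Set.Icc (0 : ℝ) 1, H 0 t = γ₀ t)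
    (hH1 : ∀ t ∈ Set.Icc (0 : ℝ) 1, H 1 t = γ₁ t)
    (hHleft : ∀ s ∈ Set.Icc (0 : ℝ) 1, H s 0 = γ₀ 0)
    (hHright : ∀ s ∈ Set.Icc (0 : ℝ) 1, H s 1 = γ₀ 1) :
    ω.intOn γ₀ 0 1 = ω.intOn γ₁ 0 1 :=
  intOn_eq_of_homotopic_rel_endpoints_general ω γ₀ γ₁ H hH hH0 hH1 hHleft hHright
end
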